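/- arXiv:0705.4328 — 5 statements merged into one kernel-verified Lean document; each statement's English description precedes it below -/
import Mathlib

section
/- Let X be a finite set and let 𝒮 be a collection of subsets of X that is pairwise compatible, i.e. for all C, D ∈ 𝒮 one of C ∩ D = ∅, C ⊆ D, D ⊆ C, or C ∪ D = X holds. Let A and B be disjoint nonempty subsets of X and let x, y be two distinct elements of X \ (A ∪ B). Suppose there exists C ∈ 𝒮 with C ∩ (A ∪ B ∪ {x}) equal to A ∪ {x} or to B, and there exists C ∈ 𝒮 with C ∩ (A ∪ B ∪ {y}) equal to A ∪ {y} or to B. Then there exists C ∈ 𝒮 with C ∩ (A ∪ B ∪ {x,y}) equal to A ∪ {x,y} or to B. (In tree terms: if a phylogenetic tree induces the split A∪{x} | B on the taxon set A∪B∪{x} and the split A∪{y} | B on A∪B∪{y}, then it induces the split A∪{x,y} | B on A∪B∪{x,y}.) -/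
private lemma sideA {α : Type*} [DecidableEq α] {C A B : Finset α} {x : α}
    (hxB : x ∉ B) (hAB : Disjoint A B)
    (h : C ∩ (A ∪ B ∪ {x}) = A ∪ {x}) :
    A ⊆ C ∧ x ∈ C ∧ ∀ z ∈ B, z ∉ C := by
  have hm := fun z => Finset.ext_iff.mp h z
  refine ⟨fun z hz => ?_, ?_, fun z hz hzC => ?_⟩
  · have := (hm z).mpr (by simp [hz])
    exact (Finset.mem_inter.mp this).1
  · have := (hm x).mpr (by simp)
    exact (Finset.mem_inter.mp this).1
  · have := (hm z).mp (by simp [hz, hzC])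
    simp only [Finset.mem_union, Finset.mem_singleton] at this
    rcases this with h' | h'
    · exact (Finset.disjoint_left.mp hAB h') hz
    · exact hxB (h' ▸ hz)

private lemma sideB {α : Type*} [DecidableEq α] {C A B : Finset α} {x : α}
    (hxB : x ∉ B) (hAB : Disjoint A B)
    (h : C ∩ (A ∪ B ∪ {x}) = B) :
    B ⊆ C ∧ x ∉ C ∧ ∀ z ∈ A, z ∉ C := by
  have hm := fun z => Finset.ext_iff.mp h z
  refine ⟨fun z hz => ?_, fun hxC => ?_, fun z hz hzC => ?_⟩
  · have := (hm z).mpr hz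
    exact (Finset.mem_inter.mp this).1
  · have := (hm x).mp (by simp [hxC])
    exact hxB this
  · have := (hm z).mp (by simp [hz, hzC])
    exact (Finset.disjoint_left.mp hAB hz) this

private lemma goalA {α : Type*} [DecidableEq α] {C A B : Finset α} {x y : α}
    (hAC : A ⊆ C) (hxC : x ∈ C) (hyC : y ∈ C) (hBC : ∀ z ∈ B, z ∉ C) :
    C ∩ (A ∪ B ∪ {x, y}) = A ∪ {x, y} := by
  ext z
  simp only [Finset.mem_inter, Finset.mem_union, Finset.mem_insert, Finset.mem_singleton]
  constructor
  · rintro ⟨hzC, (hz | hz) | hz | hz⟩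
    · exact Or.inl hz
    · exact absurd hzC (hBC z hz)
    · exact Or.inr (Or.inl hz)
    · exact Or.inr (Or.inr hz)
  · rintro (hz | hz | hz)
    · exact ⟨hAC hz, Or.inl (Or.inl hz)⟩
    · exact ⟨hz ▸ hxC, Or.inr (Or.inl hz)⟩
    · exact ⟨hz ▸ hyC, Or.inr (Or.inr hz)⟩

private lemma goalB {α : Type*} [DecidableEq α] {C A B : Finset α} {x y : α}
    (hBC : B ⊆ C) (hxC : x ∉ C) (hyC : y ∉ C) (hAC : ∀ z ∈ A, z ∉ C) :
    C ∩ (A ∪ B ∪ {x, y}) = B := by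
  ext z
  simp only [Finset.mem_inter, Finset.mem_union, Finset.mem_insert, Finset.mem_singleton]
  constructor
  · rintro ⟨hzC, (hz | hz) | hz | hz⟩
    · exact absurd hzC (hAC z hz)
    · exact hz
    · exact absurd hzC (hz ▸ hxC)
    · exact absurd hzC (hz ▸ hyC)
  · exact fun hz => ⟨hBC hz, Or.inl (Or.inr hz)⟩

/-- Split combination: if a pairwise compatible collection `𝒮` of subsets of `X`
induces the split `A ∪ {x} | B` on `A ∪ B ∪ {x}` and the split `A ∪ {y} | B` on
`A ∪ B ∪ {y}`, then it induces the split `A ∪ {x,y} | B` on `A ∪ B ∪ {x,y}`. -/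
theorem stmt11 {α : Type*} [DecidableEq α] (X : Finset α) (𝒮 : Finset (Finset α))
    (hsub : ∀ C ∈ 𝒮, C ⊆ X)
    (hcompat : ∀ C ∈ 𝒮, ∀ D ∈ 𝒮, C ∩ D = ∅ ∨ C ⊆ D ∨ D ⊆ C ∨ C ∪ D = X)
    (A B : Finset α) (hAX : A ⊆ X) (hBX : B ⊆ X)
    (hA : A.Nonempty) (hB : B.Nonempty) (hAB : Disjoint A B)
    (x y : α) (hx : x ∈ X) (hy : y ∈ X) (hxy : x ≠ y)
    (hxAB : x ∉ A ∪ B) (hyAB : y ∉ A ∪ B)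
    (h1 : ∃ C ∈ 𝒮, C ∩ (A ∪ B ∪ {x}) = A ∪ {x} ∨ C ∩ (A ∪ B ∪ {x}) = B)
    (h2 : ∃ C ∈ 𝒮, C ∩ (A ∪ B ∪ {y}) = A ∪ {y} ∨ C ∩ (A ∪ B ∪ {y}) = B) :
    ∃ C ∈ 𝒮, C ∩ (A ∪ B ∪ {x, y}) = A ∪ {x, y} ∨ C ∩ (A ∪ B ∪ {x, y}) = B := by
  obtain ⟨C₁, hC₁S, hC₁⟩ := h1
  obtain ⟨C₂, hC₂S, hC₂⟩ := h2
  obtain ⟨a, ha⟩ := hA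
  obtain ⟨b, hb⟩ := hB
  simp only [Finset.mem_union, not_or] at hxAB hyAB
  obtain ⟨hxA, hxB⟩ := hxAB
  obtain ⟨hyA, hyB⟩ := hyAB
  have hcomp := hcompat C₁ hC₁S C₂ hC₂S
  rcases hC₁ with h1A | h1B <;> rcases hC₂ with h2A | h2B
  · -- both A-side
    obtain ⟨hAC₁, hxC₁, hBC₁⟩ := sideA hxB hAB h1A
    obtain ⟨hAC₂, hyC₂, hBC₂⟩ := sideA hyB hAB h2A
    by_cases hyC₁ : y ∈ C₁
    · exact ⟨C₁, hC₁S, Or.inl (goalA hAC₁ hxC₁ hyC₁ hBC₁)⟩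
    by_cases hxC₂ : x ∈ C₂
    · exact ⟨C₂, hC₂S, Or.inl (goalA hAC₂ hxC₂ hyC₂ hBC₂)⟩
    exfalso
    rcases hcomp with h | h | h | h
    · exact Finset.eq_empty_iff_forall_notMem.mp h a (Finset.mem_inter.mpr ⟨hAC₁ ha, hAC₂ ha⟩)
    · exact hxC₂ (h hxC₁)
    · exact hyC₁ (h hyC₂)
    · have hbX : b ∈ C₁ ∪ C₂ := h ▸ hBX hb
      rcases Finset.mem_union.mp hbX with h' | h'
      · exact hBC₁ b hb h'
      · exact hBC₂ b hb h'
  · -- C₁ A-side, C₂ B-side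
    obtain ⟨hAC₁, hxC₁, hBC₁⟩ := sideA hxB hAB h1A
    obtain ⟨hBC₂, hyC₂, hAC₂⟩ := sideB hyB hAB h2B
    by_cases hyC₁ : y ∈ C₁
    · exact ⟨C₁, hC₁S, Or.inl (goalA hAC₁ hxC₁ hyC₁ hBC₁)⟩
    by_cases hxC₂ : x ∈ C₂
    swap
    · exact ⟨C₂, hC₂S, Or.inr (goalB hBC₂ hxC₂ hyC₂ hAC₂)⟩
    exfalso
    rcases hcomp with h | h | h | h
    · exact Finset.eq_empty_iff_forall_notMem.mp h x (Finset.mem_inter.mpr ⟨hxC₁, hxC₂⟩)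
    · exact hAC₂ a ha (h (hAC₁ ha))
    · exact hBC₁ b hb (h (hBC₂ hb))
    · have hyX : y ∈ C₁ ∪ C₂ := h ▸ hy
      rcases Finset.mem_union.mp hyX with h' | h'
      · exact hyC₁ h'
      · exact hyC₂ h'
  · -- C₁ B-side, C₂ A-side
    obtain ⟨hBC₁, hxC₁, hAC₁⟩ := sideB hxB hAB h1B
    obtain ⟨hAC₂, hyC₂, hBC₂⟩ := sideA hyB hAB h2A
    by_cases hyC₁ : y ∈ C₁
    swap
    · exact ⟨C₁, hC₁S, Or.inr (goalB hBC₁ hxC₁ hyC₁ hAC₁)⟩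
    by_cases hxC₂ : x ∈ C₂
    · exact ⟨C₂, hC₂S, Or.inl (goalA hAC₂ hxC₂ hyC₂ hBC₂)⟩
    exfalso
    rcases hcomp with h | h | h | h
    · exact Finset.eq_empty_iff_forall_notMem.mp h y (Finset.mem_inter.mpr ⟨hyC₁, hyC₂⟩)
    · exact hBC₂ b hb (h (hBC₁ hb))
    · exact hAC₁ a ha (h (hAC₂ ha))
    · have hxX : x ∈ C₁ ∪ C₂ := h ▸ hx
      rcases Finset.mem_union.mp hxX with h' | h'
      · exact hxC₁ h'
      · exact hxC₂ h'
  · -- both B-side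
    obtain ⟨hBC₁, hxC₁, hAC₁⟩ := sideB hxB hAB h1B
    obtain ⟨hBC₂, hyC₂, hAC₂⟩ := sideB hyB hAB h2B
    by_cases hyC₁ : y ∈ C₁
    swap
    · exact ⟨C₁, hC₁S, Or.inr (goalB hBC₁ hxC₁ hyC₁ hAC₁)⟩
    by_cases hxC₂ : x ∈ C₂
    swap
    · exact ⟨C₂, hC₂S, Or.inr (goalB hBC₂ hxC₂ hyC₂ hAC₂)⟩
    exfalso
    rcases hcomp with h | h | h | h
    · exact Finset.eq_empty_iff_forall_notMem.mp h b (Finset.mem_inter.mpr ⟨hBC₁ hb, hBC₂ hb⟩)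
    · exact hyC₂ (h hyC₁)
    · exact hxC₁ (h hxC₂)
    · have haX : a ∈ C₁ ∪ C₂ := h ▸ hAX ha
      rcases Finset.mem_union.mp haX with h' | h'
      · exact hAC₁ a ha h'
      · exact hAC₂ a ha h'
end

section
/- Let n ≥ 1 and k ≥ 2 be integers and let π : Fin k → ℝ satisfy π v > 0 for every v and ∑ v, π v = 1. Let 𝒮 be a partition of Fin n and let (𝒮ᵢ)_{i ∈ F} be a finite family of partitions of Fin n with weights αᵢ > 0 satisfying ∑_{i ∈ F} αᵢ = 1. If D 𝒮 = ∑_{i ∈ F} αᵢ • D 𝒮ᵢ (as functions (Fin n → Fin k) → ℝ), then 𝒮 is a refinement of 𝒮ᵢ for every i ∈ F, i.e. every part of 𝒮 is contained in some part of 𝒮ᵢ (𝒮 ≤ 𝒮ᵢ in the Finpartition order). -/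
/-- The partition distribution on site patterns: independently draw one state from `π`
for each block of `𝒮` and assign it to all coordinates in that block. -/
noncomputable def partitionDist {n k : ℕ} (π : Fin k → ℝ)
    (𝒮 : Finpartition (Finset.univ : Finset (Fin n))) : (Fin n → Fin k) → ℝ :=
  fun x => ∏ B ∈ 𝒮.parts, ∑ v : Fin k, π v * ∏ i ∈ B, (if x i = v then (1 : ℝ) else 0)

lemma factor_nonneg {n k : ℕ} (π : Fin k → ℝ) (hπ : ∀ v, 0 < π v)
    (B : Finset (Fin n)) (x : Fin n → Fin k) :
    0 ≤ ∑ v : Fin k, π v * ∏ i ∈ B, (if x i = v then (1:ℝ) else 0) := by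
  refine Finset.sum_nonneg fun v _ => mul_nonneg (hπ v).le ?_
  exact Finset.prod_nonneg fun i _ => by split <;> norm_num

lemma partitionDist_nonneg {n k : ℕ} (π : Fin k → ℝ) (hπ : ∀ v, 0 < π v)
    (𝒮 : Finpartition (Finset.univ : Finset (Fin n))) (x : Fin n → Fin k) :
    0 ≤ partitionDist π 𝒮 x :=
  Finset.prod_nonneg fun B _ => factor_nonneg π hπ B x

lemma partitionDist_pos_iff {n k : ℕ} (π : Fin k → ℝ) (hπ : ∀ v, 0 < π v)
    (𝒮 : Finpartition (Finset.univ : Finset (Fin n))) (x : Fin n → Fin k) :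
    0 < partitionDist π 𝒮 x ↔
      ∀ B ∈ 𝒮.parts, ∀ a ∈ B, ∀ b ∈ B, x a = x b := by
  constructor
  · intro hpos B hB a ha b hb
    by_contra hne
    have hzero : (∑ v : Fin k, π v * ∏ i ∈ B, (if x i = v then (1:ℝ) else 0)) = 0 := by
      refine Finset.sum_eq_zero fun v _ => ?_
      rcases ne_or_eq (x a) v with h | h
      · have : (∏ i ∈ B, (if x i = v then (1:ℝ) else 0)) = 0 :=
          Finset.prod_eq_zero ha (by simp [h])
        simp [this]
      · have : (∏ i ∈ B, (if x i = v then (1:ℝ) else 0)) = 0 :=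
          Finset.prod_eq_zero hb (by simp [show x b ≠ v from fun h' => hne (h.trans h'.symm)])
        simp [this]
    have : partitionDist π 𝒮 x = 0 :=
      Finset.prod_eq_zero hB hzero
    simp [this] at hpos
  · intro hconst
    refine Finset.prod_pos fun B hB => ?_
    obtain ⟨a, ha⟩ := 𝒮.nonempty_of_mem_parts hB
    have hterm : π (x a) * ∏ i ∈ B, (if x i = x a then (1:ℝ) else 0) = π (x a) := by
      have : (∏ i ∈ B, (if x i = x a then (1:ℝ) else 0)) = 1 :=
        Finset.prod_eq_one fun i hi => by simp [hconst B hB i hi a ha]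
      simp [this]
    calc (0:ℝ) < π (x a) := hπ (x a)
      _ = π (x a) * ∏ i ∈ B, (if x i = x a then (1:ℝ) else 0) := hterm.symm
      _ ≤ ∑ v : Fin k, π v * ∏ i ∈ B, (if x i = v then (1:ℝ) else 0) := by
          refine Finset.single_le_sum (f := fun v => π v * ∏ i ∈ B, (if x i = v then (1:ℝ) else 0))
            (fun v _ => mul_nonneg (hπ v).le
              (Finset.prod_nonneg fun i _ => by split <;> norm_num)) (Finset.mem_univ _)

/-- If a partition distribution is a convex combination of partition distributions,
then the partition refines every partition in the combination. -/
theorem stmt12 (n k : ℕ) (hn : 1 ≤ n) (hk : 2 ≤ k) (π : Fin k → ℝ)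
    (hπ : ∀ v, 0 < π v) (hsum : ∑ v, π v = 1)
    (𝒮 : Finpartition (Finset.univ : Finset (Fin n)))
    {ι : Type*} (F : Finset ι)
    (𝒮i : ι → Finpartition (Finset.univ : Finset (Fin n)))
    (w : ι → ℝ) (hw : ∀ i ∈ F, 0 < w i) (hwsum : ∑ i ∈ F, w i = 1)
    (heq : partitionDist π 𝒮 = ∑ i ∈ F, w i • partitionDist π (𝒮i i)) :
    ∀ i ∈ F, 𝒮 ≤ 𝒮i i := by
  intro i hi B hB
  obtain ⟨a, ha⟩ := 𝒮.nonempty_of_mem_parts hB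
  obtain ⟨C, hC, haC⟩ := (𝒮i i).exists_mem (Finset.mem_univ a)
  refine ⟨C, hC, fun b hb => ?_⟩
  -- the witness pattern
  set x : Fin n → Fin k := fun j => if j ∈ C then ⟨0, by omega⟩ else ⟨1, by omega⟩ with hx
  have hxi : 0 < partitionDist π (𝒮i i) x := by
    rw [partitionDist_pos_iff π hπ]
    intro P hP c hc d hd
    have hmem : c ∈ C ↔ d ∈ C := by
      constructor
      · intro h
        have : P = C := (𝒮i i).eq_of_mem_parts hP hC hc h
        exact this ▸ hd
      · intro h
        have : P = C := (𝒮i i).eq_of_mem_parts hP hC hd h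
        exact this ▸ hc
    by_cases h : c ∈ C
    · have h' : d ∈ C := hmem.mp h
      simp [hx, h, h']
    · have h' : d ∉ C := fun hd' => h (hmem.mpr hd')
      simp [hx, h, h']
  have hS : 0 < partitionDist π 𝒮 x := by
    rw [heq]
    have : (∑ j ∈ F, w j • partitionDist π (𝒮i j)) x
        = ∑ j ∈ F, w j * partitionDist π (𝒮i j) x := by
      simp [Finset.sum_apply]
    rw [this]
    refine Finset.sum_pos' (fun j hj => mul_nonneg (hw j hj).le (partitionDist_nonneg π hπ _ _))
      ⟨i, hi, mul_pos (hw i hi) hxi⟩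
  rw [partitionDist_pos_iff π hπ] at hS
  have hab := hS B hB a ha b hb
  by_contra hbC
  simp [hx, haC, hbC, Fin.ext_iff] at hab
end

section
/- Let n ≥ 1 and k ≥ 1 be integers, let π : Fin k → ℝ satisfy π v > 0 for every v and ∑ v, π v = 1, and let 𝒮 be a partition of Fin n. Then the expectation under D 𝒮 of the function f x = the number of ordered pairs (i, j) ∈ Fin n × Fin n with x i = x j satisfies ∑_{x : Fin n → Fin k} D 𝒮 x * f x = (∑_{B ∈ 𝒮.parts} |B|^2) + (n^2 − ∑_{B ∈ 𝒮.parts} |B|^2) * (∑_{v : Fin k} (π v)^2). -/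
private lemma ceq_aux {n k : ℕ} (𝒮 : Finpartition (Finset.univ : Finset (Fin n)))
    (c : (B : Finset (Fin n)) → B ∈ 𝒮.parts → Fin k) {B B' : Finset (Fin n)}
    (hB : B ∈ 𝒮.parts) (hB' : B' ∈ 𝒮.parts) (h : B = B') : c B hB = c B' hB' := by
  subst h; rfl

/-- Expansion of the partition distribution as a sum over colourings of the blocks. -/
private lemma partitionDist_eq {n k : ℕ} (π : Fin k → ℝ)
    (𝒮 : Finpartition (Finset.univ : Finset (Fin n))) (x : Fin n → Fin k) :
    partitionDist π 𝒮 x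
      = ∑ c ∈ 𝒮.parts.pi (fun _ => (Finset.univ : Finset (Fin k))),
          (∏ B ∈ 𝒮.parts.attach, π (c B.1 B.2)) *
            (if x = (fun l => c (𝒮.part l) (𝒮.part_mem.2 (Finset.mem_univ l))) then 1 else 0) := by
  classical
  rw [partitionDist]
  rw [Finset.prod_sum]
  refine Finset.sum_congr rfl fun c hc => ?_
  rw [Finset.prod_mul_distrib]
  congr 1
  calc ∏ B ∈ 𝒮.parts.attach, ∏ l ∈ B.1, (if x l = c B.1 B.2 then (1:ℝ) else 0)
      = ∏ B ∈ 𝒮.parts.attach, ∏ l ∈ B.1,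
          (if x l = c (𝒮.part l) (𝒮.part_mem.2 (Finset.mem_univ l)) then (1:ℝ) else 0) := by
        refine Finset.prod_congr rfl fun B _ => Finset.prod_congr rfl fun l hl => ?_
        rw [ceq_aux 𝒮 c B.2 (𝒮.part_mem.2 (Finset.mem_univ l))
          (𝒮.part_eq_of_mem B.2 hl).symm]
    _ = ∏ B ∈ 𝒮.parts, ∏ l ∈ B,
          (if x l = c (𝒮.part l) (𝒮.part_mem.2 (Finset.mem_univ l)) then (1:ℝ) else 0) :=
        Finset.prod_attach 𝒮.parts (fun B => ∏ l ∈ B,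
          (if x l = c (𝒮.part l) (𝒮.part_mem.2 (Finset.mem_univ l)) then (1:ℝ) else 0))
    _ = ∏ l ∈ 𝒮.parts.biUnion id,
          (if x l = c (𝒮.part l) (𝒮.part_mem.2 (Finset.mem_univ l)) then (1:ℝ) else 0) :=
        (Finset.prod_biUnion 𝒮.supIndep.pairwiseDisjoint).symm
    _ = ∏ l : Fin n,
          (if x l = c (𝒮.part l) (𝒮.part_mem.2 (Finset.mem_univ l)) then (1:ℝ) else 0) := by
        rw [𝒮.biUnion_parts]
    _ = if x = (fun l => c (𝒮.part l) (𝒮.part_mem.2 (Finset.mem_univ l))) then 1 else 0 := by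
        rw [Finset.prod_boole]
        congr 1
        simp [funext_iff]

private lemma pairExp {n k : ℕ} (π : Fin k → ℝ) (hsum : ∑ v, π v = 1)
    (𝒮 : Finpartition (Finset.univ : Finset (Fin n))) (i j : Fin n) :
    ∑ x : Fin n → Fin k, partitionDist π 𝒮 x * (if x i = x j then (1:ℝ) else 0)
      = if 𝒮.part i = 𝒮.part j then 1 else ∑ v, π v ^ 2 := by
  classical
  have hpi := 𝒮.part_mem.2 (Finset.mem_univ i)
  have hpj := 𝒮.part_mem.2 (Finset.mem_univ j)
  have step1 : ∑ x : Fin n → Fin k, partitionDist π 𝒮 x * (if x i = x j then (1:ℝ) else 0)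
      = ∑ c ∈ 𝒮.parts.pi (fun _ => (Finset.univ : Finset (Fin k))),
          (∏ B ∈ 𝒮.parts.attach, π (c B.1 B.2)) *
            (if c (𝒮.part i) hpi = c (𝒮.part j) hpj then 1 else 0) := by
    simp_rw [partitionDist_eq π 𝒮, Finset.sum_mul]
    rw [Finset.sum_comm]
    refine Finset.sum_congr rfl fun c hc => ?_
    simp_rw [mul_assoc, ← Finset.mul_sum]
    congr 1
    rw [Finset.sum_eq_single (fun l => c (𝒮.part l) (𝒮.part_mem.2 (Finset.mem_univ l)))]
    · simp
    · intro x _ hx; simp [hx]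
    · simp
  rw [step1]
  by_cases hij : 𝒮.part i = 𝒮.part j
  · have h1 : ∀ c ∈ 𝒮.parts.pi (fun _ => (Finset.univ : Finset (Fin k))),
        (∏ B ∈ 𝒮.parts.attach, π (c B.1 B.2)) *
          (if c (𝒮.part i) hpi = c (𝒮.part j) hpj then (1:ℝ) else 0)
        = ∏ B ∈ 𝒮.parts.attach, π (c B.1 B.2) := by
      intro c _
      rw [if_pos (ceq_aux 𝒮 c hpi hpj hij), mul_one]
    rw [Finset.sum_congr rfl h1,
      ← Finset.prod_sum 𝒮.parts (fun _ => (Finset.univ : Finset (Fin k))) (fun _ w => π w),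
      if_pos hij]
    simp [hsum]
  · rw [if_neg hij]
    have hsplit : ∀ a b : Fin k, (if a = b then (1:ℝ) else 0)
        = ∑ v : Fin k, (if a = v then (1:ℝ) else 0) * (if b = v then 1 else 0) := by
      intro a b
      rw [Finset.sum_eq_single b]
      · simp
      · intro v _ hv; simp [Ne.symm hv]
      · simp
    have hsplit' : ∀ c ∈ 𝒮.parts.pi (fun _ => (Finset.univ : Finset (Fin k))),
        (∏ B ∈ 𝒮.parts.attach, π (c B.1 B.2)) *
          (if c (𝒮.part i) hpi = c (𝒮.part j) hpj then (1:ℝ) else 0)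
        = ∑ v : Fin k, (∏ B ∈ 𝒮.parts.attach, π (c B.1 B.2)) *
            ((if c (𝒮.part i) hpi = v then (1:ℝ) else 0) *
             (if c (𝒮.part j) hpj = v then (1:ℝ) else 0)) := by
      intro c _
      rw [hsplit (c _ hpi) (c _ hpj), Finset.mul_sum]
    rw [Finset.sum_congr rfl hsplit', Finset.sum_comm]
    refine Finset.sum_congr rfl fun v _ => ?_
    -- introduce the per-block weight function
    set g : Finset (Fin n) → Fin k → ℝ := fun B w =>
      π w * ((if B = 𝒮.part i then (if w = v then (1:ℝ) else 0) else 1) *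
             (if B = 𝒮.part j then (if w = v then (1:ℝ) else 0) else 1)) with hg
    have hterm : ∀ c ∈ 𝒮.parts.pi (fun _ => (Finset.univ : Finset (Fin k))),
        (∏ B ∈ 𝒮.parts.attach, π (c B.1 B.2)) *
          ((if c (𝒮.part i) hpi = v then (1:ℝ) else 0) *
           (if c (𝒮.part j) hpj = v then (1:ℝ) else 0))
        = ∏ B ∈ 𝒮.parts.attach, g B.1 (c B.1 B.2) := by
      intro c _
      simp only [hg]
      rw [Finset.prod_mul_distrib, Finset.prod_mul_distrib]
      congr 1
      congr 1
      · rw [Finset.prod_eq_single (⟨𝒮.part i, hpi⟩ : {x // x ∈ 𝒮.parts})]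
        · simp
        · intro b _ hb
          rw [if_neg fun h => hb (Subtype.ext h)]
        · intro h; exact absurd (Finset.mem_attach _ _) h
      · rw [Finset.prod_eq_single (⟨𝒮.part j, hpj⟩ : {x // x ∈ 𝒮.parts})]
        · simp
        · intro b _ hb
          rw [if_neg fun h => hb (Subtype.ext h)]
        · intro h; exact absurd (Finset.mem_attach _ _) h
    rw [Finset.sum_congr rfl hterm,
      ← Finset.prod_sum 𝒮.parts (fun _ => (Finset.univ : Finset (Fin k))) (fun B w => g B w)]
    have hgsum : ∀ B ∈ 𝒮.parts, (∑ w : Fin k, g B w)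
        = (if B = 𝒮.part i then π v else 1) * (if B = 𝒮.part j then π v else 1) := by
      intro B _
      by_cases h1 : B = 𝒮.part i
      · subst h1
        simp [hg, hij]
      · by_cases h2 : B = 𝒮.part j
        · subst h2
          simp [hg, h1]
        · simp [hg, h1, h2, hsum]
    rw [Finset.prod_congr rfl hgsum, Finset.prod_mul_distrib,
      Finset.prod_ite_eq' 𝒮.parts (𝒮.part i), Finset.prod_ite_eq' 𝒮.parts (𝒮.part j),
      if_pos hpi, if_pos hpj, ← sq]

/-- The expectation under the partition distribution `D 𝒮` of the number of ordered
pairs `(i, j)` with `x i = x j` is `|𝒮|₂² + (n² - |𝒮|₂²) |π|₂²`. -/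
theorem stmt13 (n k : ℕ) (hn : 1 ≤ n) (hk : 1 ≤ k) (π : Fin k → ℝ)
    (hπ : ∀ v, 0 < π v) (hsum : ∑ v, π v = 1)
    (𝒮 : Finpartition (Finset.univ : Finset (Fin n))) :
    ∑ x : Fin n → Fin k, partitionDist π 𝒮 x *
        ((Finset.univ.filter fun p : Fin n × Fin n => x p.1 = x p.2).card : ℝ) =
      (∑ B ∈ 𝒮.parts, (B.card : ℝ) ^ 2) +
        ((n : ℝ) ^ 2 - ∑ B ∈ 𝒮.parts, (B.card : ℝ) ^ 2) * ∑ v : Fin k, π v ^ 2 := by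
  classical
  have hcard : ∀ x : Fin n → Fin k,
      ((Finset.univ.filter fun p : Fin n × Fin n => x p.1 = x p.2).card : ℝ)
        = ∑ p : Fin n × Fin n, (if x p.1 = x p.2 then (1:ℝ) else 0) := by
    intro x
    rw [Finset.sum_boole]
  simp_rw [hcard, Finset.mul_sum]
  rw [Finset.sum_comm]
  rw [Finset.sum_congr rfl (fun p _ => pairExp π hsum 𝒮 p.1 p.2)]
  -- count the same-block pairs
  set T : Finset (Fin n × Fin n) :=
    Finset.univ.filter (fun p : Fin n × Fin n => 𝒮.part p.1 = 𝒮.part p.2) with hTdef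
  have hT : T = 𝒮.parts.biUnion (fun B => B ×ˢ B) := by
    ext p
    simp only [hTdef, Finset.mem_filter, Finset.mem_univ, true_and, Finset.mem_biUnion,
      Finset.mem_product]
    constructor
    · intro h
      refine ⟨𝒮.part p.1, 𝒮.part_mem.2 (Finset.mem_univ p.1),
        𝒮.mem_part (Finset.mem_univ p.1), ?_⟩
      rw [h]; exact 𝒮.mem_part (Finset.mem_univ p.2)
    · rintro ⟨B, hB, h1, h2⟩
      rw [𝒮.part_eq_of_mem hB h1, 𝒮.part_eq_of_mem hB h2]
  have hTcard : (T.card : ℝ) = ∑ B ∈ 𝒮.parts, (B.card : ℝ) ^ 2 := by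
    rw [hT, Finset.card_biUnion]
    · push_cast
      refine Finset.sum_congr rfl fun B _ => ?_
      rw [Finset.card_product, sq]
      push_cast
      ring
    · intro B hB B' hB' hne
      rw [Function.onFun, Finset.disjoint_left]
      rintro p hp hp'
      rw [Finset.mem_product] at hp hp'
      exact Finset.disjoint_left.1 (𝒮.supIndep.pairwiseDisjoint hB hB' hne) hp.1 hp'.1
  have hTc : ((Finset.univ.filter
      (fun p : Fin n × Fin n => ¬ 𝒮.part p.1 = 𝒮.part p.2)).card : ℝ)
      = (n : ℝ) ^ 2 - T.card := by
    have h := Finset.card_filter_add_card_filter_not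
      (s := (Finset.univ : Finset (Fin n × Fin n)))
      (p := fun p : Fin n × Fin n => 𝒮.part p.1 = 𝒮.part p.2)
    have hu : (Finset.univ : Finset (Fin n × Fin n)).card = n * n := by simp
    rw [hu] at h
    have : ((T.card : ℝ) + ((Finset.univ.filter
        (fun p : Fin n × Fin n => ¬ 𝒮.part p.1 = 𝒮.part p.2)).card : ℝ)) = (n : ℝ) * n := by
      rw [hTdef]
      exact_mod_cast congrArg (fun m : ℕ => (m : ℝ)) h
    nlinarith [this]
  rw [Finset.sum_ite]
  simp only [Finset.sum_const, nsmul_eq_mul, mul_one]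
  rw [← hTdef]  -- may be unnecessary
  rw [hTc, hTcard, ← Finset.mul_sum]
end

section
/- Let n ≥ 1, let 𝒮 be a partition of Fin n, and let D 𝒮 : (Fin n → Bool) → ℝ be the CFN partition distribution. Let s : Bool → ℝ be given by s false = 1 and s true = −1. Then for every A : Finset (Fin n), ∑_{x : Fin n → Bool} D 𝒮 x * ∏_{i ∈ A} s (x i) = 1 if |B ∩ A| is even for every part B of 𝒮, and = 0 otherwise. In particular this Fourier coefficient vanishes whenever |A| is odd, and for the partition having a single nonsingleton part S (all other parts singletons) it equals 1 exactly when A ⊆ S and |A| is even. -/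
/-- The CFN (two-state symmetric) partition distribution: one uniform state drawn
independently for each block of the partition `𝒮`. -/
noncomputable def cfnDist {n : ℕ} (𝒮 : Finpartition (Finset.univ : Finset (Fin n))) :
    (Fin n → Bool) → ℝ :=
  fun x =>
    if ∀ B ∈ 𝒮.parts, ∀ i ∈ B, ∀ j ∈ B, x i = x j then (1 / 2 : ℝ) ^ 𝒮.parts.card else 0

open Finset in
lemma biUnion_inter_parts {n : ℕ} (𝒮 : Finpartition (Finset.univ : Finset (Fin n)))
    (A : Finset (Fin n)) : A = 𝒮.parts.biUnion (fun B => B ∩ A) := by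
  ext i
  simp only [mem_biUnion, mem_inter]
  constructor
  · intro hi
    exact ⟨𝒮.part i, 𝒮.part_mem.mpr (mem_univ i), 𝒮.mem_part (mem_univ i), hi⟩
  · rintro ⟨B, _, _, hi⟩; exact hi

open Finset in
lemma card_eq_sum_inter_parts {n : ℕ} (𝒮 : Finpartition (Finset.univ : Finset (Fin n)))
    (A : Finset (Fin n)) : A.card = ∑ B ∈ 𝒮.parts, (B ∩ A).card := by
  conv_lhs => rw [biUnion_inter_parts 𝒮 A]
  exact card_biUnion (fun B hB B' hB' hne =>
      (𝒮.disjoint hB hB' hne).mono inter_subset_left inter_subset_left)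

open Finset in
lemma cfn_fourier {n : ℕ} (𝒮 : Finpartition (Finset.univ : Finset (Fin n)))
    (s : Bool → ℝ) (hsf : s false = 1) (hst : s true = -1) (A : Finset (Fin n)) :
    ∑ x : Fin n → Bool, cfnDist 𝒮 x * ∏ i ∈ A, s (x i) =
      if ∀ B ∈ 𝒮.parts, Even (B ∩ A).card then 1 else 0 := by
  classical
  set P : (Fin n → Bool) → Prop :=
    fun x => ∀ B ∈ 𝒮.parts, ∀ i ∈ B, ∀ j ∈ B, x i = x j with hP
  set c : ℝ := (1 / 2 : ℝ) ^ 𝒮.parts.card with hc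
  have hstep1 : ∑ x : Fin n → Bool, cfnDist 𝒮 x * ∏ i ∈ A, s (x i)
      = ∑ x ∈ univ.filter P, c * ∏ i ∈ A, s (x i) := by
    rw [sum_filter]
    refine Finset.sum_congr rfl fun x _ => ?_
    by_cases hx : P x <;> simp [cfnDist, hP, hx, hc]
  -- bijection with functions on parts
  set ι := {B // B ∈ 𝒮.parts}
  set Φ : (ι → Bool) → (Fin n → Bool) :=
    fun b i => b ⟨𝒮.part i, 𝒮.part_mem.mpr (mem_univ i)⟩ with hΦ
  have hΦval : ∀ (b : ι → Bool) (B : ι) (i : Fin n), i ∈ B.1 → Φ b i = b B := by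
    intro b B i hi
    have := 𝒮.part_eq_of_mem B.2 hi
    simp only [hΦ]
    congr 1
    exact Subtype.ext this
  set Ψ : (Fin n → Bool) → (ι → Bool) :=
    fun x B => x (𝒮.nonempty_of_mem_parts B.2).choose with hΨ
  have hΦΨ : ∀ x ∈ univ.filter P, Φ (Ψ x) = x := by
    intro x hx
    simp only [mem_filter, mem_univ, true_and, hP] at hx
    funext i
    have hpm := 𝒮.part_mem.mpr (mem_univ i)
    have h1 : Φ (Ψ x) i = Ψ x ⟨𝒮.part i, hpm⟩ :=
      hΦval (Ψ x) ⟨𝒮.part i, hpm⟩ i (𝒮.mem_part (mem_univ i))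
    rw [h1]
    exact hx (𝒮.part i) hpm ((𝒮.nonempty_of_mem_parts hpm).choose)
      (𝒮.nonempty_of_mem_parts hpm).choose_spec i (𝒮.mem_part (mem_univ i))
  have hstep2 : ∑ x ∈ univ.filter P, c * ∏ i ∈ A, s (x i)
      = ∑ b : ι → Bool, c * ∏ i ∈ A, s (Φ b i) := by
    refine Finset.sum_nbij' Ψ Φ (fun x hx => mem_univ _) ?_ hΦΨ ?_ ?_
    · intro b hb
      simp only [mem_filter, mem_univ, true_and]
      intro B hB i hi j hj
      rw [hΦval b ⟨B, hB⟩ i hi, hΦval b ⟨B, hB⟩ j hj]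
    · intro b hb
      funext B
      exact hΦval b B _ (𝒮.nonempty_of_mem_parts B.2).choose_spec
    · intro x hx
      rw [hΦΨ x hx]
  -- compute product along parts
  have hstep3 : ∀ b : ι → Bool,
      ∏ i ∈ A, s (Φ b i) = ∏ B : ι, s (b B) ^ (B.1 ∩ A).card := by
    intro b
    have : ∏ i ∈ A, s (Φ b i) = ∏ B ∈ 𝒮.parts, ∏ i ∈ B ∩ A, s (Φ b i) := by
      conv_lhs => rw [biUnion_inter_parts 𝒮 A]
      exact prod_biUnion (fun B hB B' hB' hne =>
        (𝒮.disjoint hB hB' hne).mono inter_subset_left inter_subset_left)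
    rw [this, ← Finset.prod_attach 𝒮.parts (fun B => ∏ i ∈ B ∩ A, s (Φ b i)),
      Finset.univ_eq_attach]
    refine Finset.prod_congr rfl fun B _ => ?_
    rw [← Finset.prod_const]
    refine Finset.prod_congr rfl fun i hi => ?_
    exact congrArg s (hΦval b B i (Finset.mem_inter.mp hi).1)
  have hsum : ∑ b : ι → Bool, ∏ B : ι, s (b B) ^ (B.1 ∩ A).card
      = ∏ B : ι, ∑ t : Bool, s t ^ (B.1 ∩ A).card := by
    rw [Finset.prod_univ_sum, Fintype.piFinset_univ]
  have hbool : ∀ m : ℕ, ∑ t : Bool, s t ^ m = 1 + (-1 : ℝ) ^ m := by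
    intro m
    rw [Fintype.sum_bool, hst, hsf, one_pow]
    ring
  rw [hstep1, hstep2, ← Finset.mul_sum]
  have : ∑ b : ι → Bool, ∏ i ∈ A, s (Φ b i)
      = ∏ B : ι, (1 + (-1 : ℝ) ^ (B.1 ∩ A).card) := by
    rw [Finset.sum_congr rfl fun b _ => hstep3 b, hsum]
    exact Finset.prod_congr rfl fun B _ => hbool _
  rw [this]
  by_cases hall : ∀ B ∈ 𝒮.parts, Even (B ∩ A).card
  · rw [if_pos hall]
    have : ∏ B : ι, (1 + (-1 : ℝ) ^ (B.1 ∩ A).card) = ∏ _B : ι, (2 : ℝ) := by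
      refine Finset.prod_congr rfl fun B _ => ?_
      rw [(hall B.1 B.2).neg_one_pow]
      norm_num
    rw [this, Finset.prod_const, Finset.card_univ, Fintype.card_coe, hc, ← mul_pow]
    norm_num
  · rw [if_neg hall]
    push_neg at hall
    obtain ⟨B, hB, hodd⟩ := hall
    have : ∏ B : ι, (1 + (-1 : ℝ) ^ (B.1 ∩ A).card) = 0 := by
      refine Finset.prod_eq_zero (Finset.mem_univ (⟨B, hB⟩ : ι)) ?_
      rw [(Nat.not_even_iff_odd.mp hodd).neg_one_pow]
      ring
    rw [this, mul_zero]

/-- Fourier coefficients of the CFN partition distribution: the coefficient at `A`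
is `1` if every part meets `A` in an even set and `0` otherwise; in particular it
vanishes for odd `A`, and for the partition with a single nonsingleton part `S` it
equals `1` exactly when `A ⊆ S` and `|A|` is even. -/
theorem stmt15 (n : ℕ) (hn : 1 ≤ n) (𝒮 : Finpartition (Finset.univ : Finset (Fin n)))
    (s : Bool → ℝ) (hsf : s false = 1) (hst : s true = -1) :
    (∀ A : Finset (Fin n),
      ∑ x : Fin n → Bool, cfnDist 𝒮 x * ∏ i ∈ A, s (x i) =
        if ∀ B ∈ 𝒮.parts, Even (B ∩ A).card then 1 else 0) ∧
    (∀ A : Finset (Fin n), Odd A.card →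
      ∑ x : Fin n → Bool, cfnDist 𝒮 x * ∏ i ∈ A, s (x i) = 0) ∧
    (∀ S : Finset (Fin n), S ∈ 𝒮.parts → (∀ B ∈ 𝒮.parts, B = S ∨ B.card = 1) →
      ∀ A : Finset (Fin n),
        ((∑ x : Fin n → Bool, cfnDist 𝒮 x * ∏ i ∈ A, s (x i)) = 1 ↔
          A ⊆ S ∧ Even A.card)) := by
  classical
  refine ⟨fun A => cfn_fourier 𝒮 s hsf hst A, ?_, ?_⟩
  · intro A hA
    rw [cfn_fourier 𝒮 s hsf hst A, if_neg]
    intro h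
    have : Even A.card := by
      rw [card_eq_sum_inter_parts 𝒮 A]
      exact Finset.even_sum _ h
    exact (Nat.not_even_iff_odd.mpr hA) this
  · intro S hS hparts A
    rw [cfn_fourier 𝒮 s hsf hst A]
    constructor
    · intro h1
      have h : ∀ B ∈ 𝒮.parts, Even (B ∩ A).card := by
        by_contra hcon; rw [if_neg hcon] at h1; norm_num at h1
      have hAS : A ⊆ S := by
        intro i hi
        have hpm := 𝒮.part_mem.mpr (Finset.mem_univ i)
        have hip := 𝒮.mem_part (Finset.mem_univ i)
        rcases hparts _ hpm with heq | hcard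
        · rwa [← heq]
        · exfalso
          have : 𝒮.part i = {i} := by
            rw [Finset.card_eq_one] at hcard
            obtain ⟨a, ha⟩ := hcard
            rw [ha] at hip ⊢
            simp_all
          have heven := h _ hpm
          rw [this, Finset.inter_eq_left.mpr (by simpa using hi)] at heven
          simp at heven
      refine ⟨hAS, ?_⟩
      have := h S hS
      rwa [Finset.inter_eq_right.mpr hAS] at this
    · rintro ⟨hAS, hAeven⟩
      rw [if_pos]
      intro B hB
      rcases hparts B hB with heq | hcard
      · subst heq; rwa [Finset.inter_eq_right.mpr hAS]
      · rw [Finset.card_eq_one] at hcard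
        obtain ⟨a, ha⟩ := hcard
        subst ha
        by_cases haA : a ∈ A
        · by_cases hBS : ({a} : Finset (Fin n)) = S
          · rw [hBS, Finset.inter_eq_right.mpr hAS]; exact hAeven
          · exfalso
            have hdisj := 𝒮.disjoint hB hS hBS
            exact (Finset.disjoint_left.mp hdisj) (Finset.mem_singleton_self a) (hAS haA)
        · have : ({a} : Finset (Fin n)) ∩ A = ∅ := by
            rw [Finset.singleton_inter_of_notMem haA]
          rw [this]; simp
end

section
/- Let α ∈ ℝ with 0 < α < 1 and let θ, θ̃, θ' : Fin 5 → ℝ have all values in the open interval (0,1). Suppose that for every A : Finset (Fin 4) of even cardinality, α * ∏_{e ∈ Fin 5 with |L e ∩ A| odd} θ e + (1 − α) * ∏_{e ∈ Fin 5 with |L e ∩ A| odd} θ̃ e = ∏_{e ∈ Fin 5 with |L' e ∩ A| odd} θ' e, where L is the leaf-side structure of the quartet tree 01|23 and L' that of the quartet tree 02|13. Then θ 0 * θ 1 ≠ θ̃ 0 * θ̃ 1 and θ 2 * θ 3 ≠ θ̃ 2 * θ̃ 3. (Equivalently, writing kᵢ = θ i / θ̃ i for the fidelity ratios of the two mixed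 branch-length sets: k₀ ≠ k₁⁻¹ and k₂ ≠ k₃⁻¹.) -/
/-- Leaf-side map of the quartet tree `01|23`: edges `0,1,2,3` are pendant and
edge `4` is internal with taxa `{0,1}` on one side. -/
def quartetL : Fin 5 → Finset (Fin 4)
  | 0 => {0}
  | 1 => {1}
  | 2 => {2}
  | 3 => {3}
  | 4 => {0, 1}

/-- Leaf-side map of the quartet tree `02|13`. -/
def quartetL' : Fin 5 → Finset (Fin 4)
  | 0 => {0}
  | 1 => {1}
  | 2 => {2}
  | 3 => {3}
  | 4 => {0, 2}

/-- If a two-class CFN mixture on the quartet tree `01|23` mimics an unmixed CFN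
process on the quartet tree `02|13`, then neither pendant fidelity pair of a cherry
can have reciprocal ratios: `θ₀ θ₁ ≠ θ̃₀ θ̃₁` and `θ₂ θ₃ ≠ θ̃₂ θ̃₃`. -/
theorem stmt17 (α : ℝ) (hα0 : 0 < α) (hα1 : α < 1) (θ θt θ' : Fin 5 → ℝ)
    (hθ : ∀ e, θ e ∈ Set.Ioo (0 : ℝ) 1) (hθt : ∀ e, θt e ∈ Set.Ioo (0 : ℝ) 1)
    (hθ' : ∀ e, θ' e ∈ Set.Ioo (0 : ℝ) 1)
    (h : ∀ A : Finset (Fin 4), Even A.card →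
      α * (∏ e ∈ Finset.univ.filter fun e => Odd (quartetL e ∩ A).card, θ e) +
        (1 - α) * (∏ e ∈ Finset.univ.filter fun e => Odd (quartetL e ∩ A).card, θt e) =
      ∏ e ∈ Finset.univ.filter fun e => Odd (quartetL' e ∩ A).card, θ' e) :
    θ 0 * θ 1 ≠ θt 0 * θt 1 ∧ θ 2 * θ 3 ≠ θt 2 * θt 3 := by
  have hA1 := h {0,1} (by decide)
  have hA2 := h {2,3} (by decide)
  have hA3 := h {0,1,2,3} (by decide)
  rw [show (Finset.univ.filter fun e => Odd (quartetL e ∩ ({0,1}:Finset (Fin 4))).card) = ({0,1}:Finset (Fin 5)) from by decide,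
      show (Finset.univ.filter fun e => Odd (quartetL' e ∩ ({0,1}:Finset (Fin 4))).card) = ({0,1,4}:Finset (Fin 5)) from by decide] at hA1
  rw [show (Finset.univ.filter fun e => Odd (quartetL e ∩ ({2,3}:Finset (Fin 4))).card) = ({2,3}:Finset (Fin 5)) from by decide,
      show (Finset.univ.filter fun e => Odd (quartetL' e ∩ ({2,3}:Finset (Fin 4))).card) = ({2,3,4}:Finset (Fin 5)) from by decide] at hA2
  rw [show (Finset.univ.filter fun e => Odd (quartetL e ∩ ({0,1,2,3}:Finset (Fin 4))).card) = ({0,1,2,3}:Finset (Fin 5)) from by decide,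
      show (Finset.univ.filter fun e => Odd (quartetL' e ∩ ({0,1,2,3}:Finset (Fin 4))).card) = ({0,1,2,3}:Finset (Fin 5)) from by decide] at hA3
  simp [Finset.prod_insert, Finset.prod_pair] at hA1 hA2 hA3
  obtain ⟨h0p, h0l⟩ := hθ 0; obtain ⟨h1p, h1l⟩ := hθ 1
  obtain ⟨h2p, h2l⟩ := hθ 2; obtain ⟨h3p, h3l⟩ := hθ 3
  obtain ⟨ht0p, ht0l⟩ := hθt 0; obtain ⟨ht1p, ht1l⟩ := hθt 1
  obtain ⟨ht2p, ht2l⟩ := hθt 2; obtain ⟨ht3p, ht3l⟩ := hθt 3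
  obtain ⟨h0'p, h0'l⟩ := hθ' 0; obtain ⟨h1'p, h1'l⟩ := hθ' 1
  obtain ⟨h2'p, h2'l⟩ := hθ' 2; obtain ⟨h3'p, h3'l⟩ := hθ' 3
  obtain ⟨h4'p, h4'l⟩ := hθ' 4
  have h4sq : θ' 4 ^ 2 < 1 := by nlinarith
  have hXpos : 0 < θ' 0 * θ' 1 * θ' 2 * θ' 3 :=
    mul_pos (mul_pos (mul_pos h0'p h1'p) h2'p) h3'p
  constructor
  · intro heq
    have hp : θ 0 * θ 1 = θ' 0 * (θ' 1 * θ' 4) := by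
      linear_combination hA1 + (1 - α) * heq
    have hQ : θ 0 * θ 1 * (θ' 2 * (θ' 3 * θ' 4)) = θ' 0 * (θ' 1 * (θ' 2 * θ' 3)) := by
      linear_combination hA3 - (θ 0 * θ 1) * hA2 + ((1 - α) * (θt 2 * θt 3)) * heq
    have hfin : θ' 0 * θ' 1 * θ' 2 * θ' 3 * θ' 4 ^ 2 = θ' 0 * θ' 1 * θ' 2 * θ' 3 := by
      linear_combination hQ - (θ' 2 * θ' 3 * θ' 4) * hp
    have hpos : (0:ℝ) < 1 - θ' 4 ^ 2 := by linarith
    nlinarith [mul_pos hXpos hpos, hfin]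
  · intro heq
    have hp : θ 2 * θ 3 = θ' 2 * (θ' 3 * θ' 4) := by
      linear_combination hA2 + (1 - α) * heq
    have hQ : θ 2 * θ 3 * (θ' 0 * (θ' 1 * θ' 4)) = θ' 0 * (θ' 1 * (θ' 2 * θ' 3)) := by
      linear_combination hA3 - (θ 2 * θ 3) * hA1 + ((1 - α) * (θt 0 * θt 1)) * heq
    have hfin : θ' 0 * θ' 1 * θ' 2 * θ' 3 * θ' 4 ^ 2 = θ' 0 * θ' 1 * θ' 2 * θ' 3 := by
      linear_combination hQ - (θ' 0 * θ' 1 * θ' 4) * hp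
    have hpos : (0:ℝ) < 1 - θ' 4 ^ 2 := by linarith
    nlinarith [mul_pos hXpos hpos, hfin]
end
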